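/- arXiv:2003.04785 — 2 statements merged into one kernel-verified Lean document; each statement's English description precedes it below -/
import Mathlib

section
/- Let L be a Lie algebra over F equipped with a grading L = ⊕_{i≥1} L(i) by subspaces satisfying [L(i), L(j)] ⊆ L(i+j) for all i,j ≥ 1, and assume L is nilpotent. Let I be a set of nonzero homogeneous elements of L, let P be the Lie subalgebra of L generated by I, and let x ↦ x′ be an injective map from I to L such that for every x ∈ I ∩ L(i) one has x′ ∈ ⊕_{j≥i} L(j) and x′ − x ∈ ⊕_{j≥i+1} L(j). Let R be the Lie subalgebra of L generated by { x′ : x ∈ I }. Then R is nilpotent and the nilpotency degree of P is at most the nilpotency degree of R. -/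
open scoped Classical

noncomputable section

namespace Paper

attribute [local instance 100] LieRing.ofAssociativeRing

variable {F : Type*}

/-- Offset (starting global index) of the `i`-th block. -/
def off {k : ℕ} (dv : Fin k → ℕ) (i : Fin k) : ℕ := ∑ t ∈ Finset.Iio i, dv t

/-- Total size `d = d₁ + ⋯ + d_k`. -/
def dtot {k : ℕ} (dv : Fin k → ℕ) : ℕ := ∑ t, dv t

theorem off_add_lt {k : ℕ} (dv : Fin k → ℕ) (i : Fin k) (r : Fin (dv i)) :
    off dv i + (r : ℕ) < dtot dv := by
  have h1 : off dv i + dv i ≤ dtot dv := by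
    have h : off dv i + dv i = ∑ t ∈ insert i (Finset.Iio i), dv t := by
      rw [Finset.sum_insert (by simp), add_comm]
      rfl
    rw [h]
    exact Finset.sum_le_sum_of_subset (Finset.subset_univ _)
  have := r.isLt
  omega

/-- The global index of the `r`-th row/column of the `i`-th block. -/
def emb {k : ℕ} (dv : Fin k → ℕ) (i : Fin k) (r : Fin (dv i)) : Fin (dtot dv) :=
  ⟨off dv i + r, off_add_lt dv i r⟩

/-- The projection `p_{i,j}` onto the `(i,j)`-block. -/
def blk {k : ℕ} (dv : Fin k → ℕ) (i j : Fin k)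
    (A : Matrix (Fin (dtot dv)) (Fin (dtot dv)) F) :
    Matrix (Fin (dv i)) (Fin (dv j)) F :=
  Matrix.of fun r s => A (emb dv i r) (emb dv j s)

/-- The `p × p` upper triangular Jordan block `J^p(α)`. -/
def Jord [Field F] (p : ℕ) (α : F) : Matrix (Fin p) (Fin p) F :=
  Matrix.of fun a b =>
    if (b : ℕ) = (a : ℕ) then α else if (b : ℕ) = (a : ℕ) + 1 then 1 else 0

/-- The matrix whose `(i,j)` block is `M` and all other blocks vanish. -/
def embMat [Field F] {k : ℕ} (dv : Fin k → ℕ) (i j : Fin k)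
    (M : Matrix (Fin (dv i)) (Fin (dv j)) F) :
    Matrix (Fin (dtot dv)) (Fin (dtot dv)) F :=
  Matrix.of fun x y => ∑ r, ∑ s, if x = emb dv i r ∧ y = emb dv j s then M r s else 0

/-- The block diagonal matrix `D(α,λ) = J^{d₁}(α) ⊕ J^{d₂}(α-λ) ⊕ ⋯ ⊕ J^{d_k}(α-(k-1)λ)`. -/
def Dmat [Field F] {k : ℕ} (dv : Fin k → ℕ) (α lam : F) :
    Matrix (Fin (dtot dv)) (Fin (dtot dv)) F :=
  ∑ i : Fin k, embMat dv i i (Jord (dv i) (α - ((i : ℕ) : F) * lam))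

/-- `A` is the matrix `E(S)` of an admissible sequence `S`:  all blocks vanish except the
blocks `p_{i,i+1}`, and each block `p_{i,i+1}` has nonzero lower-left (i.e. `(dᵢ,1)`) entry. -/
def IsEShaped [Field F] {k : ℕ} (dv : Fin k → ℕ)
    (A : Matrix (Fin (dtot dv)) (Fin (dtot dv)) F) : Prop :=
  (∀ i j : Fin k, (j : ℕ) ≠ (i : ℕ) + 1 → blk dv i j A = 0) ∧
  (∀ i j : Fin k, (j : ℕ) = (i : ℕ) + 1 →
    ∀ (hr : dv i - 1 < dv i) (hs : 0 < dv j),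
      A (emb dv i ⟨dv i - 1, hr⟩) (emb dv j ⟨0, hs⟩) ≠ 0)

/-- The matrix `E(C)` of the canonical sequence `C`. -/
def CanE (F : Type*) [Field F] {k : ℕ} (dv : Fin k → ℕ) :
    Matrix (Fin (dtot dv)) (Fin (dtot dv)) F :=
  Matrix.of fun x y =>
    if ∃ i j : Fin k, (j : ℕ) = (i : ℕ) + 1 ∧
        (x : ℕ) = off dv i + (dv i - 1) ∧ (y : ℕ) = off dv j
    then 1 else 0

/-- The Lie subalgebra `h(α,λ,S)` of `gl(d,F)` generated by `D(α,λ)` and `E(S) = A`. -/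
def hAlg (F : Type*) [Field F] {k : ℕ} (dv : Fin k → ℕ) (α lam : F)
    (A : Matrix (Fin (dtot dv)) (Fin (dtot dv)) F) :
    LieSubalgebra F (Matrix (Fin (dtot dv)) (Fin (dtot dv)) F) :=
  LieSubalgebra.lieSpan F _ {Dmat dv α lam, A}

/-- The Lie subalgebra `n(S)` generated by the matrices `(ad D(0,0))^l (E(S))`, `l ≥ 0`. -/
def nAlg (F : Type*) [Field F] {k : ℕ} (dv : Fin k → ℕ)
    (A : Matrix (Fin (dtot dv)) (Fin (dtot dv)) F) :
    LieSubalgebra F (Matrix (Fin (dtot dv)) (Fin (dtot dv)) F) :=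
  LieSubalgebra.lieSpan F _ {X | ∃ l : ℕ, X = (fun Y => ⁅Dmat dv (0 : F) 0, Y⁆)^[l] A}

/-- `r_{i,j}`:  `0` if the `(i,j)`-blocks of all members of `h(0,0,C)` vanish, and otherwise
the minimal rank of a nonzero `(i,j)`-block of a member of `h(0,0,C)`. -/
def rr (F : Type*) [Field F] {k : ℕ} (dv : Fin k → ℕ) (i j : Fin k) : ℕ :=
  if ∀ X ∈ hAlg F dv 0 0 (CanE F dv), blk dv i j X = 0 then 0
  else sInf {n | ∃ X ∈ hAlg F dv 0 0 (CanE F dv),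
    blk dv i j X ≠ 0 ∧ (blk dv i j X).rank = n}

/-- The automorphism `φ(A)_{i,j} = (−1)^{i−j+1} A_{d+1−j,d+1−i}` (here written 0-indexed). -/
def Phi (F : Type*) [Field F] (d : ℕ) (A : Matrix (Fin d) (Fin d) F) :
    Matrix (Fin d) (Fin d) F :=
  Matrix.of fun x y =>
    (-1 : F) ^ ((x : ℕ) + (y : ℕ) + 1) *
      A ⟨d - 1 - (y : ℕ), by have := y.isLt; omega⟩ ⟨d - 1 - (x : ℕ), by have := x.isLt; omega⟩

/-- `d⃗` is symmetric: `dᵢ = d_{k+1−i}` for all `i` (0-indexed: `dᵢ = d_{k-1-i}`). -/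
def SymmSeq {k : ℕ} (dv : Fin k → ℕ) : Prop :=
  ∀ i j : Fin k, (i : ℕ) + (j : ℕ) = k - 1 → dv i = dv j

/-- `d⃗` is odd-symmetric: symmetric, `k` odd and the middle `d_{(k+1)/2}` odd. -/
def OddSymmSeq {k : ℕ} (dv : Fin k → ℕ) : Prop :=
  SymmSeq dv ∧ Odd k ∧ ∀ i : Fin k, 2 * (i : ℕ) = k - 1 → Odd (dv i)

/-- Conditions (1) and (2) of Definition `Normalized` (weak normalization), expressed on the
matrix `A = E(S)`, so that `S(i)_{a,b} = A (emb i a) (emb (i+1) b)` (0-indexed). -/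
def IsWeaklyNormalized [Field F] {k : ℕ} (dv : Fin k → ℕ)
    (A : Matrix (Fin (dtot dv)) (Fin (dtot dv)) F) : Prop :=
  (∀ i j : Fin k, (j : ℕ) = (i : ℕ) + 1 →
      ∀ (hr : dv i - 1 < dv i) (hs : 0 < dv j),
        A (emb dv i ⟨dv i - 1, hr⟩) (emb dv j ⟨0, hs⟩) = 1) ∧
  (∀ i j l : Fin k, (j : ℕ) = (i : ℕ) + 1 → (l : ℕ) = (j : ℕ) + 1 →
      ∀ (hr : dv i - 1 < dv i) (s : Fin (dv j)) (hs : dv j - 1 - (s : ℕ) < dv j)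
        (h0 : 0 < dv l),
        A (emb dv i ⟨dv i - 1, hr⟩) (emb dv j s) =
          A (emb dv j ⟨dv j - 1 - (s : ℕ), hs⟩) (emb dv l ⟨0, h0⟩))

/-- The sequence `S` (given through its matrix `A = E(S)`) is normalized. -/
def IsNormalized [Field F] {k : ℕ} (dv : Fin k → ℕ)
    (A : Matrix (Fin (dtot dv)) (Fin (dtot dv)) F) : Prop :=
  IsWeaklyNormalized dv A ∧
  (∀ i j : Fin k, (i : ℕ) = 0 → (j : ℕ) = 1 →
      ∀ (r : Fin (dv i)) (hs : 0 < dv j), (r : ℕ) ≠ dv i - 1 →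
        A (emb dv i r) (emb dv j ⟨0, hs⟩) = 0) ∧
  (∀ i j : Fin k, (j : ℕ) = (i : ℕ) + 1 → (j : ℕ) = k - 1 →
      ∀ (hr : dv i - 1 < dv i) (s : Fin (dv j)), (s : ℕ) ≠ 0 →
        A (emb dv i ⟨dv i - 1, hr⟩) (emb dv j s) = 0)

/-- Membership in the group `G(d⃗)`: a block diagonal matrix each of whose diagonal blocks is
a polynomial with nonzero constant term evaluated at `J^{dᵢ}(0)`. -/
def InG (F : Type*) [Field F] {k : ℕ} (dv : Fin k → ℕ)
    (P : Matrix (Fin (dtot dv)) (Fin (dtot dv)) F) : Prop :=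
  IsUnit P ∧ ∃ q : Fin k → Polynomial F, (∀ i, (q i).coeff 0 ≠ 0) ∧
    P = ∑ i : Fin k, embMat dv i i (Polynomial.aeval (Jord (dv i) (0 : F)) (q i))

/-- The nilpotency degree of a Lie algebra: the least `m` with `L^m = 0` in the lower central
series `L^0 = L`, `L^{i+1} = [L, L^i]`. -/
def nilDeg (F : Type*) (L : Type*) [Field F] [LieRing L] [LieAlgebra F L] : ℕ :=
  sInf {m | LieModule.lowerCentralSeries F L L m = ⊥}

/-!
Let `K` be the subalgebra generated by `f '' I` (the `R` of the statement) and write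
`W i = ⨆ j ≥ i, V j`. Call a homogeneous `a ∈ V s` a leading term of `K^n` if
`β - a ∈ W (s + 1)` for some `β ∈ K^n`. Since the bracket respects the grading, the bracket of
leading terms of `K^i` and `K^j` is a leading term of `K^(i+j+1)` (the leading term of the
bracket of the two `β`s). The generators `x ∈ I` of `P` are leading terms of `K = K^0`
(witnessed by `f x`), so by induction `P^n` lies in the span of the leading terms of `K^n`.
If `K^m = 0`, a leading term `a ∈ V s` of `K^m` lies in `V s ∩ W (s + 1) = 0`, hence `P^m = 0`.
Finally `K` is nilpotent as a subalgebra of the nilpotent algebra `L`.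
-/

section NilpotencyDegree

variable {K L : Type*} [Field K] [LieRing L] [LieAlgebra K L]

theorem nilDeg_le_of_lowerCentralSeries_eq_bot {n : ℕ}
    (h : LieModule.lowerCentralSeries K L L n = ⊥) : nilDeg K L ≤ n :=
  Nat.sInf_le h

theorem lowerCentralSeries_nilDeg_eq_bot [LieRing.IsNilpotent L] :
    LieModule.lowerCentralSeries K L L (nilDeg K L) = ⊥ :=
  Nat.sInf_mem ((LieModule.isNilpotent_iff K L L).mp ‹_›)

end NilpotencyDegree

section Grading

open Submodule LieModule

variable {R L : Type*} [CommRing R] [LieRing L] [LieAlgebra R L]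

theorem lie_mem_of_mem_span {s t : Set L} {S : Submodule R L}
    (h : ∀ x ∈ s, ∀ y ∈ t, ⁅x, y⁆ ∈ S) {x y : L} (hx : x ∈ span R s) (hy : y ∈ span R t) :
    ⁅x, y⁆ ∈ S := by
  induction hx, hy using span_induction₂ with
  | mem_mem x y hx hy => exact h x hx y hy
  | zero_left => simp
  | zero_right => simp
  | add_left _ _ _ _ _ _ h₁ h₂ => rw [add_lie]; exact add_mem h₁ h₂
  | add_right _ _ _ _ _ _ h₁ h₂ => rw [lie_add]; exact add_mem h₁ h₂
  | smul_left r _ _ _ _ h => rw [smul_lie]; exact smul_mem _ r h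
  | smul_right r _ _ _ _ h => rw [lie_smul]; exact smul_mem _ r h

theorem lie_mem_lowerCentralSeries_succ_of_mem_left {x : L} {i : ℕ}
    (hx : x ∈ lowerCentralSeries R L L i) (y : L) :
    ⁅x, y⁆ ∈ lowerCentralSeries R L L (i + 1) := by
  rw [← lie_skew, lowerCentralSeries_succ]
  exact neg_mem (LieSubmodule.lie_mem_lie (LieSubmodule.mem_top y) hx)

theorem lie_mem_lowerCentralSeries_add_succ {x y : L} {i j : ℕ}
    (hx : x ∈ lowerCentralSeries R L L i) (hy : y ∈ lowerCentralSeries R L L j) :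
    ⁅x, y⁆ ∈ lowerCentralSeries R L L (i + j + 1) := by
  induction j generalizing i x y with
  | zero => exact lie_mem_lowerCentralSeries_succ_of_mem_left hx y
  | succ j ih =>
    rw [lowerCentralSeries_succ, ← LieSubmodule.mem_toSubmodule,
      LieSubmodule.lieIdeal_oper_eq_linear_span'] at hy
    refine lie_mem_of_mem_span (s := {x}) ?_ (subset_span rfl) hy
    rintro _ rfl _ ⟨a, -, c, hc, rfl⟩
    rw [leibniz_lie]
    refine add_mem ?_ ?_
    · have := ih (lie_mem_lowerCentralSeries_succ_of_mem_left hx a) hc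
      rwa [add_right_comm i 1 j] at this
    · rw [← add_assoc, lowerCentralSeries_succ]
      exact LieSubmodule.lie_mem_lie (LieSubmodule.mem_top a) (ih hx hc)

variable (V : ℕ → Submodule R L)

def filtration (i : ℕ) : Submodule R L := ⨆ j ∈ Set.Ici i, V j

variable {V}

theorem filtration_eq_span (i : ℕ) :
    filtration V i = span R (⋃ j ∈ Set.Ici i, (V j : Set L)) := by
  simp only [filtration, span_iUnion₂, span_eq]

theorem le_filtration {i j : ℕ} (h : i ≤ j) : V j ≤ filtration V i :=
  le_biSup V (Set.mem_Ici.mpr h)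

theorem filtration_antitone : Antitone (filtration V) := fun _ _ h =>
  biSup_mono fun _ hk => le_trans h hk

theorem lie_mem_filtration (hbracket : ∀ i j, ∀ x ∈ V i, ∀ y ∈ V j, ⁅x, y⁆ ∈ V (i + j))
    {i j : ℕ} {x y : L} (hx : x ∈ filtration V i) (hy : y ∈ filtration V j) :
    ⁅x, y⁆ ∈ filtration V (i + j) := by
  rw [filtration_eq_span] at hx hy
  refine lie_mem_of_mem_span ?_ hx hy
  simp only [Set.mem_iUnion₂, SetLike.mem_coe, Set.mem_Ici]
  rintro x ⟨a, ha, hx⟩ y ⟨b, hb, hy⟩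
  exact le_filtration (add_le_add ha hb) (hbracket a b x hx y hy)

theorem eq_zero_of_mem_filtration_succ (hindep : iSupIndep V) {s : ℕ} {a : L} (ha : a ∈ V s)
    (ha' : a ∈ filtration V (s + 1)) : a = 0 := by
  have hle : filtration V (s + 1) ≤ ⨆ j ≠ s, V j :=
    biSup_mono fun j hj => (Nat.lt_of_succ_le hj).ne'
  exact (mem_bot R).mp ((hindep s).le_bot ⟨ha, hle ha'⟩)

variable (V) in
def leadingTerms (K : LieSubalgebra R L) (n : ℕ) : Set L :=
  {a | ∃ s, a ∈ V s ∧ ∃ β ∈ lowerCentralSeries R K K n, (β : L) - a ∈ filtration V (s + 1)}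

variable {K : LieSubalgebra R L}

theorem leadingTerms_antitone : Antitone (leadingTerms V K) := by
  rintro m n h a ⟨s, ha, β, hβ, hβa⟩
  exact ⟨s, ha, β, antitone_lowerCentralSeries R K K h hβ, hβa⟩

theorem lie_mem_leadingTerms (hbracket : ∀ i j, ∀ x ∈ V i, ∀ y ∈ V j, ⁅x, y⁆ ∈ V (i + j))
    {i j : ℕ} {a b : L} (ha : a ∈ leadingTerms V K i) (hb : b ∈ leadingTerms V K j) :
    ⁅a, b⁆ ∈ leadingTerms V K (i + j + 1) := by
  obtain ⟨s, has, α, hα, hαa⟩ := ha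
  obtain ⟨t, hbt, β, hβ, hβb⟩ := hb
  have hβt : (β : L) ∈ filtration V t := by
    simpa using add_mem (filtration_antitone (Nat.le_succ t) hβb) (le_filtration le_rfl hbt)
  refine ⟨s + t, hbracket s t a has b hbt, ⁅α, β⁆, lie_mem_lowerCentralSeries_add_succ hα hβ, ?_⟩
  have hsplit : ⁅(α : L), (β : L)⁆ - ⁅a, b⁆ = ⁅(α : L) - a, (β : L)⁆ + ⁅a, (β : L) - b⁆ := by
    rw [sub_lie, lie_sub]; abel
  rw [LieSubalgebra.coe_bracket, hsplit]
  refine add_mem ?_ ?_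
  · simpa only [add_right_comm s 1 t] using lie_mem_filtration hbracket hαa hβt
  · simpa only [add_assoc] using lie_mem_filtration hbracket (le_filtration le_rfl has) hβb

theorem lie_mem_span_leadingTerms (hbracket : ∀ i j, ∀ x ∈ V i, ∀ y ∈ V j, ⁅x, y⁆ ∈ V (i + j))
    {i j : ℕ} {a b : L} (ha : a ∈ span R (leadingTerms V K i))
    (hb : b ∈ span R (leadingTerms V K j)) :
    ⁅a, b⁆ ∈ span R (leadingTerms V K (i + j + 1)) :=
  lie_mem_of_mem_span (fun _ hx _ hy => subset_span (lie_mem_leadingTerms hbracket hx hy)) ha hb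

theorem lieSpan_le_span_leadingTerms (hbracket : ∀ i j, ∀ x ∈ V i, ∀ y ∈ V j, ⁅x, y⁆ ∈ V (i + j))
    {s : Set L} (hs : s ⊆ leadingTerms V K 0) :
    (LieSubalgebra.lieSpan R L s : Submodule R L) ≤ span R (leadingTerms V K 0) := by
  let S : LieSubalgebra R L :=
    { span R (leadingTerms V K 0) with
      lie_mem' := fun hx hy =>
        span_mono (leadingTerms_antitone (Nat.zero_le _)) (lie_mem_span_leadingTerms hbracket hx hy) }
  exact (LieSubalgebra.lieSpan_le (K := S)).mpr (hs.trans subset_span)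

theorem span_leadingTerms_eq_bot (hindep : iSupIndep V) {n : ℕ}
    (hK : lowerCentralSeries R K K n = ⊥) : span R (leadingTerms V K n) = ⊥ := by
  refine (span_eq_bot).mpr ?_
  rintro a ⟨s, ha, β, hβ, hβa⟩
  rw [hK, LieSubmodule.mem_bot] at hβ
  refine eq_zero_of_mem_filtration_succ hindep ha ?_
  simpa [hβ] using hβa

theorem coe_mem_of_mem_lowerCentralSeries {S : ℕ → Submodule R L}
    (h0 : ∀ x ∈ K, x ∈ S 0) (hS : ∀ n, ∀ x ∈ K, ∀ y ∈ S n, ⁅x, y⁆ ∈ S (n + 1))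
    {n : ℕ} {x : K} (hx : x ∈ lowerCentralSeries R K K n) : (x : L) ∈ S n := by
  induction n generalizing x with
  | zero => exact h0 x x.2
  | succ n ih =>
    rw [lowerCentralSeries_succ, ← LieSubmodule.mem_toSubmodule,
      LieSubmodule.lieIdeal_oper_eq_linear_span'] at hx
    refine span_le (p := (S (n + 1)).comap (K.incl : K →ₗ[R] L)) |>.mpr ?_ hx
    rintro _ ⟨a, -, c, hc, rfl⟩
    exact hS n a a.2 c (ih hc)

theorem lowerCentralSeries_lieSpan_eq_bot
    (hbracket : ∀ i j, ∀ x ∈ V i, ∀ y ∈ V j, ⁅x, y⁆ ∈ V (i + j)) (hindep : iSupIndep V)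
    {s : Set L} (hs : s ⊆ leadingTerms V K 0) {n : ℕ} (hK : lowerCentralSeries R K K n = ⊥) :
    lowerCentralSeries R (LieSubalgebra.lieSpan R L s) (LieSubalgebra.lieSpan R L s) n = ⊥ := by
  have h0 : ∀ x ∈ LieSubalgebra.lieSpan R L s, x ∈ span R (leadingTerms V K 0) :=
    fun _ hx => lieSpan_le_span_leadingTerms hbracket hs hx
  refine (LieSubmodule.eq_bot_iff _).mpr fun x hx => Subtype.ext ?_
  have hx' := coe_mem_of_mem_lowerCentralSeries (S := fun n => span R (leadingTerms V K n)) h0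
    (fun n _ ha _ hb => by simpa using lie_mem_span_leadingTerms hbracket (h0 _ ha) hb) hx
  rwa [span_leadingTerms_eq_bot hindep hK, mem_bot] at hx'

end Grading

theorem statement2_general {F : Type*} [Field F]
    {L : Type*} [LieRing L] [LieAlgebra F L]
    (V : ℕ → Submodule F L) (hinternal : DirectSum.IsInternal V)
    (hbracket : ∀ i j : ℕ, ∀ x ∈ V i, ∀ y ∈ V j, ⁅x, y⁆ ∈ V (i + j))
    (hnilp : LieRing.IsNilpotent L)
    (I : Set L) (hI : ∀ x ∈ I, x ≠ 0 ∧ ∃ i : ℕ, x ∈ V i)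
    (f : L → L)
    (hf : ∀ x ∈ I, ∀ i : ℕ, x ∈ V i →
      f x ∈ (⨆ j ∈ Set.Ici i, V j) ∧ f x - x ∈ (⨆ j ∈ Set.Ici (i + 1), V j)) :
    LieRing.IsNilpotent ↥(LieSubalgebra.lieSpan F L (f '' I)) ∧
    nilDeg F ↥(LieSubalgebra.lieSpan F L I) ≤
      nilDeg F ↥(LieSubalgebra.lieSpan F L (f '' I)) := by
  set K := LieSubalgebra.lieSpan F L (f '' I)
  have hK : LieRing.IsNilpotent K :=
    Function.Injective.lieAlgebra_isNilpotent (f := K.incl) Subtype.val_injective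
  refine ⟨hK, ?_⟩
  have hgen : I ⊆ leadingTerms V K 0 := by
    intro x hx
    obtain ⟨-, i, hxi⟩ := hI x hx
    exact ⟨i, hxi, ⟨f x, LieSubalgebra.subset_lieSpan (Set.mem_image_of_mem f hx)⟩,
      LieSubmodule.mem_top _, (hf x hx i hxi).2⟩
  exact nilDeg_le_of_lowerCentralSeries_eq_bot
    (lowerCentralSeries_lieSpan_eq_bot hbracket hinternal.submodule_iSupIndep hgen
      lowerCentralSeries_nilDeg_eq_bot)

/-- Proposition `algraduada`, Lie algebra version:  in a nilpotent graded Lie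
algebra `L = ⊕_{i≥1} L(i)`, if `P` is generated by a set `I` of nonzero homogeneous elements
and `x ↦ f x` is injective on `I` with `f x ∈ ⊕_{j≥i} L(j)` and `f x − x ∈ ⊕_{j≥i+1} L(j)`
whenever `x ∈ I ∩ L(i)`, and `R` is generated by `f '' I`, then `R` is nilpotent and the
nilpotency degree of `P` is at most that of `R`. -/
theorem statement2 {F : Type*} [Field F] [CharZero F]
    {L : Type*} [LieRing L] [LieAlgebra F L]
    (V : ℕ → Submodule F L) (hinternal : DirectSum.IsInternal V) (hV0 : V 0 = ⊥)
    (hbracket : ∀ i j : ℕ, ∀ x ∈ V i, ∀ y ∈ V j, ⁅x, y⁆ ∈ V (i + j))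
    (hnilp : LieRing.IsNilpotent L)
    (I : Set L) (hI : ∀ x ∈ I, x ≠ 0 ∧ ∃ i : ℕ, x ∈ V i)
    (f : L → L) (hinj : Set.InjOn f I)
    (hf : ∀ x ∈ I, ∀ i : ℕ, x ∈ V i →
      f x ∈ (⨆ j ∈ Set.Ici i, V j) ∧ f x - x ∈ (⨆ j ∈ Set.Ici (i + 1), V j)) :
    LieRing.IsNilpotent ↥(LieSubalgebra.lieSpan F L (f '' I)) ∧
    nilDeg F ↥(LieSubalgebra.lieSpan F L I) ≤
      nilDeg F ↥(LieSubalgebra.lieSpan F L (f '' I)) :=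
  statement2_general V hinternal hbracket hnilp I hI f hf

end Paper
end
end

section
/- For all α, λ ∈ F and every admissible sequence S: (a) h(α,λ,S) is a solvable Lie algebra, and it is nilpotent if λ = 0; (b) n(S) is a Lie ideal of h(α,λ,S); (c) h(α,λ,S) is the direct sum, as a vector space, of the line F·D(α,λ) and n(S). -/
/-!
Write `D(α,λ) = D(0,0) + C`, where `C` is the diagonal matrix acting on the `i`-th block by
`α - iλ`. Every generator `(ad D(0,0))^l E(S)` of `n(S)` lives on the block superdiagonal, where
`ad C` is multiplication by `λ`. Hence `ad D(α,λ)` maps these generators into `n(S)`, so it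
preserves `n(S)`, and `F·D(α,λ) + n(S)` is a Lie subalgebra containing the generators of
`h(α,λ,S)`; it is therefore `h(α,λ,S)`, all of whose brackets lie in `n(S)`. The sum is direct
because `n(S)` is strictly block upper triangular while `D(α,λ)` is block diagonal.

Strictly block upper triangular matrices are nilpotent, so `n(S)` is nilpotent by Engel's theorem
and `h(α,λ,S)`, whose derived algebra lies in `n(S)`, is solvable. For `λ = 0`,
`D(α,0) = α·1 + D(0,0)`, so every element of `h(α,λ,S)` is a scalar plus a nilpotent matrix and
Engel's theorem applies to `h(α,λ,S)` itself.
-/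

open scoped Classical

noncomputable section

namespace Paper

attribute [local instance 100] LieRing.ofAssociativeRing

variable {F : Type*}

section Filtration

variable (R : Type*) {ι : Type*} [CommRing R]

def raising (w : ι → ℕ) (m : ℕ) : Submodule R (Matrix ι ι R) where
  carrier := {X | ∀ x y, w y < w x + m → X x y = 0}
  add_mem' hX hY x y h := by simp [hX x y h, hY x y h]
  zero_mem' _ _ _ := rfl
  smul_mem' c X hX x y h := by simp [hX x y h]

def homogeneous (w : ι → ℕ) (m : ℕ) : Submodule R (Matrix ι ι R) where
  carrier := {X | ∀ x y, w y ≠ w x + m → X x y = 0}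
  add_mem' hX hY x y h := by simp [hX x y h, hY x y h]
  zero_mem' _ _ _ := rfl
  smul_mem' c X hX x y h := by simp [hX x y h]

variable {R} {w : ι → ℕ} {m m' : ℕ} {X Y : Matrix ι ι R}

lemma raising_antitone (h : m' ≤ m) : raising R w m ≤ raising R w m' :=
  fun _ hX x y hxy => hX x y (by omega)

lemma mul_mem_raising [Fintype ι] (hX : X ∈ raising R w m) (hY : Y ∈ raising R w m') :
    X * Y ∈ raising R w (m + m') := by
  intro x y h
  rw [Matrix.mul_apply]
  refine Finset.sum_eq_zero fun z _ => ?_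
  by_cases hz : w z < w x + m
  · rw [hX x z hz, zero_mul]
  · rw [hY z y (by omega), mul_zero]

lemma lie_mem_raising [Fintype ι] (hX : X ∈ raising R w m) (hY : Y ∈ raising R w m') :
    ⁅X, Y⁆ ∈ raising R w (m + m') :=
  Ring.lie_def X Y ▸ sub_mem (mul_mem_raising hX hY) (add_comm m m' ▸ mul_mem_raising hY hX)

lemma pow_mem_raising [Fintype ι] [DecidableEq ι] (hX : X ∈ raising R w 1) (n : ℕ) :
    X ^ n ∈ raising R w n := by
  induction n with
  | zero =>
    intro x y h
    rw [pow_zero, Matrix.one_apply_ne]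
    rintro rfl
    omega
  | succ n ih => exact pow_succ X n ▸ mul_mem_raising ih hX

lemma isNilpotent_of_mem_raising [Fintype ι] [DecidableEq ι] {n : ℕ} (hw : ∀ x, w x < n)
    (hX : X ∈ raising R w 1) : IsNilpotent X :=
  ⟨n, Matrix.ext fun x y => pow_mem_raising hX n x y (by have := hw y; omega)⟩

lemma raising_one_le_raising_one {w' : ι → ℕ} (h : ∀ x y, w x < w y → w' x < w' y) :
    raising R w 1 ≤ raising R w' 1 := by
  intro X hX x y hxy
  refine hX x y (not_le.mp fun hlt => ?_)
  have := h x y (by omega)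
  omega

variable (R) in
def raisingLieSubalgebra [Fintype ι] (w : ι → ℕ) (m : ℕ) :
    LieSubalgebra R (Matrix ι ι R) :=
  { raising R w m with
    lie_mem' := fun hX hY => raising_antitone (by omega) (lie_mem_raising hX hY) }

lemma mul_mem_homogeneous [Fintype ι] (hX : X ∈ homogeneous R w m)
    (hY : Y ∈ homogeneous R w m') : X * Y ∈ homogeneous R w (m + m') := by
  intro x y h
  rw [Matrix.mul_apply]
  refine Finset.sum_eq_zero fun z _ => ?_
  by_cases hz : w z = w x + m
  · rw [hY z y (by omega), mul_zero]
  · rw [hX x z hz, zero_mul]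

lemma lie_mem_homogeneous [Fintype ι] (hX : X ∈ homogeneous R w m)
    (hY : Y ∈ homogeneous R w m') : ⁅X, Y⁆ ∈ homogeneous R w (m + m') :=
  Ring.lie_def X Y ▸
    sub_mem (mul_mem_homogeneous hX hY) (add_comm m m' ▸ mul_mem_homogeneous hY hX)

lemma homogeneous_le_raising : homogeneous R w m ≤ raising R w m :=
  fun _ hX x y h => hX x y (by omega)

lemma homogeneous_inf_raising : homogeneous R w m ⊓ raising R w (m + 1) = ⊥ := by
  refine eq_bot_iff.mpr fun X ⟨hX, hX'⟩ => (Submodule.mem_bot R).mpr (Matrix.ext fun x y => ?_)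
  by_cases h : w y = w x + m
  · exact hX' x y (by omega)
  · exact hX x y h

lemma lie_diagonal_of_mem_homogeneous [Fintype ι] [DecidableEq ι] (a lam : R)
    (hX : X ∈ homogeneous R w m) :
    ⁅Matrix.diagonal fun x => a - (w x : R) * lam, X⁆ = ((m : R) * lam) • X := by
  ext x y
  rw [Ring.lie_def, Matrix.sub_apply, Matrix.diagonal_mul, Matrix.mul_diagonal,
    Matrix.smul_apply, smul_eq_mul]
  by_cases h : w y = w x + m
  · rw [h]
    push_cast
    ring
  · simp [hX x y h]

end Filtration

section LieAlgebra

open LieAlgebra LieSubalgebra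

variable {R L : Type*} [CommRing R] [LieRing L] [LieAlgebra R L]

lemma lie_mem_lieSpan {s : Set L} {D : L} (hs : ∀ x ∈ s, ⁅D, x⁆ ∈ lieSpan R L s) {y : L}
    (hy : y ∈ lieSpan R L s) : ⁅D, y⁆ ∈ lieSpan R L s := by
  induction hy using lieSpan_induction with
  | mem x hx => exact hs x hx
  | zero => simp
  | add x y _ _ hx hy => simpa only [lie_add] using add_mem hx hy
  | smul a x _ hx => simpa only [lie_smul] using SMulMemClass.smul_mem a hx
  | lie x y hx' hy' hx hy =>
    rw [leibniz_lie]
    exact add_mem (lie_mem _ hx hy') (lie_mem _ hx' hy)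

lemma lie_mem_of_mem_span_singleton_sup {D : L} {K : LieSubalgebra R L}
    (hD : ∀ y ∈ K, ⁅D, y⁆ ∈ K) {x y : L}
    (hx : x ∈ Submodule.span R {D} ⊔ K.toSubmodule)
    (hy : y ∈ Submodule.span R {D} ⊔ K.toSubmodule) : ⁅x, y⁆ ∈ K := by
  obtain ⟨_, hd, z, hz, rfl⟩ := Submodule.mem_sup.mp hx
  obtain ⟨_, he, z', hz', rfl⟩ := Submodule.mem_sup.mp hy
  obtain ⟨a, rfl⟩ := Submodule.mem_span_singleton.mp hd
  obtain ⟨b, rfl⟩ := Submodule.mem_span_singleton.mp he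
  have hz'D : ⁅z, D⁆ ∈ K := by rw [← lie_skew]; exact K.neg_mem (hD z hz)
  simp only [add_lie, lie_add, smul_lie, lie_smul, lie_self, smul_zero, zero_add]
  exact add_mem (K.smul_mem b hz'D) (add_mem (K.smul_mem a (hD z' hz')) (K.lie_mem hz hz'))

lemma toSubmodule_lieSpan_pair {D a : L} {K : LieSubalgebra R L} (ha : a ∈ K)
    (hK : K ≤ lieSpan R L {D, a}) (hD : ∀ y ∈ K, ⁅D, y⁆ ∈ K) :
    (lieSpan R L {D, a}).toSubmodule = Submodule.span R {D} ⊔ K.toSubmodule := by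
  let M : LieSubalgebra R L :=
    { Submodule.span R {D} ⊔ K.toSubmodule with
      lie_mem' := fun hx hy =>
        Submodule.mem_sup_right (lie_mem_of_mem_span_singleton_sup hD hx hy) }
  refine le_antisymm (fun x hx => ?_) (sup_le ?_ hK)
  · refine (lieSpan_le.mpr ?_ : lieSpan R L {D, a} ≤ M) hx
    rintro _ (rfl | rfl)
    · exact Submodule.mem_sup_left (Submodule.mem_span_singleton_self _)
    · exact Submodule.mem_sup_right ha
  · exact Submodule.span_le.mpr (Set.singleton_subset_iff.mpr (subset_lieSpan (by simp)))

lemma isSolvable_of_derivedSeries_one_le (I : LieIdeal R L) [IsSolvable I]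
    (h : derivedSeries R L 1 ≤ I) : IsSolvable L := by
  obtain ⟨k, hk⟩ := (isSolvable_iff R I).mp ‹_›
  refine IsSolvable.mk (R := R) (k := k + 1) (eq_bot_iff.mpr ?_)
  rw [derivedSeries_def, derivedSeriesOfIdeal_add, ← derivedSeries_def,
    ← (LieIdeal.derivedSeries_eq_bot_iff I k).mp hk]
  exact derivedSeriesOfIdeal_mono h k

lemma isNilpotent_ad_of_isNilpotent_sub_algebraMap {A : Type*} [Ring A] [Algebra R A] {a : A}
    (s : R) (h : IsNilpotent (a - algebraMap R A s)) : IsNilpotent (ad R A a) := by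
  have had : ad R A a = ad R A (a - algebraMap R A s) := by
    ext b
    simp [Ring.lie_def, Algebra.commutes]
  exact had ▸ ad_nilpotent_of_nilpotent h

end LieAlgebra

lemma isNilpotent_of_forall_isNilpotent_ad {K L : Type*} [Field K] [LieRing L] [LieAlgebra K L]
    [FiniteDimensional K L] (H : LieSubalgebra K L)
    (h : ∀ x ∈ H, IsNilpotent (LieAlgebra.ad K L x)) : LieRing.IsNilpotent H :=
  LieAlgebra.isNilpotent_iff_forall.mpr fun x => H.isNilpotent_ad_of_isNilpotent_ad (h x x.2)

section Blocks

variable {k : ℕ} {dv : Fin k → ℕ}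

lemma off_add_le_off {i j : Fin k} (h : i < j) : off dv i + dv i ≤ off dv j := by
  have hsub : insert i (Finset.Iio i) ⊆ Finset.Iio j := by
    intro t ht
    rcases Finset.mem_insert.mp ht with rfl | ht
    · exact Finset.mem_Iio.mpr h
    · exact Finset.mem_Iio.mpr ((Finset.mem_Iio.mp ht).trans h)
  calc off dv i + dv i = ∑ t ∈ insert i (Finset.Iio i), dv t := by
        rw [Finset.sum_insert (by simp), add_comm]; rfl
    _ ≤ off dv j := Finset.sum_le_sum_of_subset hsub

lemma val_emb_lt_val_emb {i j : Fin k} (h : i < j) (r : Fin (dv i)) (s : Fin (dv j)) :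
    (emb dv i r : ℕ) < emb dv j s := by
  have := off_add_le_off (dv := dv) h
  simp only [emb]
  omega

lemma emb_injective : Function.Injective fun p : Σ i, Fin (dv i) => emb dv p.1 p.2 := by
  rintro ⟨i, r⟩ ⟨j, s⟩ h
  obtain rfl : i = j := by
    by_contra hij
    rcases Ne.lt_or_gt hij with hlt | hlt
    · exact (val_emb_lt_val_emb hlt r s).ne (congrArg Fin.val h)
    · exact (val_emb_lt_val_emb hlt s r).ne (congrArg Fin.val h).symm
  have : (r : ℕ) = s := by simpa [emb] using congrArg Fin.val h
  rw [Fin.ext this]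

def embEquiv (dv : Fin k → ℕ) : (Σ i, Fin (dv i)) ≃ Fin (dtot dv) :=
  Equiv.ofBijective _ ((Fintype.bijective_iff_injective_and_card _).mpr
    ⟨emb_injective, by simp only [Fintype.card_sigma, Fintype.card_fin]; rfl⟩)

lemma exists_emb_eq (x : Fin (dtot dv)) : ∃ i r, emb dv i r = x :=
  ⟨_, _, (embEquiv dv).apply_symm_apply x⟩

lemma emb_inj {i : Fin k} {r s : Fin (dv i)} : emb dv i r = emb dv i s ↔ r = s :=
  ⟨fun h => eq_of_heq (Sigma.mk.inj_iff.mp (emb_injective h)).2, congrArg _⟩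

lemma eq_of_emb_eq {i j : Fin k} {r : Fin (dv i)} {s : Fin (dv j)}
    (h : emb dv i r = emb dv j s) : i = j :=
  (Sigma.mk.inj_iff.mp (emb_injective h)).1

def blockOf (dv : Fin k → ℕ) (x : Fin (dtot dv)) : ℕ := ((embEquiv dv).symm x).1

@[simp]
lemma blockOf_emb (i : Fin k) (r : Fin (dv i)) : blockOf dv (emb dv i r) = i := by
  rw [blockOf, show emb dv i r = embEquiv dv ⟨i, r⟩ from rfl, Equiv.symm_apply_apply]

variable [Field F]

lemma embMat_apply_emb_self {i j : Fin k} (M : Matrix (Fin (dv i)) (Fin (dv j)) F)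
    (r : Fin (dv i)) (s : Fin (dv j)) : embMat dv i j M (emb dv i r) (emb dv j s) = M r s := by
  simp [embMat, emb_inj, ite_and]

lemma embMat_apply_emb_of_ne {i j a b : Fin k} (M : Matrix (Fin (dv i)) (Fin (dv j)) F)
    (r : Fin (dv a)) (s : Fin (dv b)) (h : a ≠ i ∨ b ≠ j) :
    embMat dv i j M (emb dv a r) (emb dv b s) = 0 := by
  simp only [embMat, Matrix.of_apply]
  refine Finset.sum_eq_zero fun r' _ => Finset.sum_eq_zero fun s' _ => if_neg ?_
  rintro ⟨h1, h2⟩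
  exact h.elim (· (eq_of_emb_eq h1)) (· (eq_of_emb_eq h2))

lemma Dmat_apply_emb_self (α lam : F) {i : Fin k} (r s : Fin (dv i)) :
    Dmat dv α lam (emb dv i r) (emb dv i s) = Jord (dv i) (α - (i : ℕ) * lam) r s := by
  rw [Dmat, Matrix.sum_apply, Finset.sum_eq_single i (fun j _ hj =>
    embMat_apply_emb_of_ne _ r s (Or.inl (Ne.symm hj))) (by simp)]
  exact embMat_apply_emb_self _ r s

lemma Dmat_apply_emb_of_ne (α lam : F) {i j : Fin k} (r : Fin (dv i)) (s : Fin (dv j))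
    (h : i ≠ j) : Dmat dv α lam (emb dv i r) (emb dv j s) = 0 := by
  rw [Dmat, Matrix.sum_apply]
  refine Finset.sum_eq_zero fun t _ => embMat_apply_emb_of_ne _ r s ?_
  by_cases hi : i = t
  · exact Or.inr (hi ▸ Ne.symm h)
  · exact Or.inl hi

lemma Dmat_sub_Dmat_zero (α lam : F) :
    Dmat dv α lam - Dmat dv 0 0 = Matrix.diagonal fun x => α - (blockOf dv x : F) * lam := by
  ext x y
  obtain ⟨i, r, rfl⟩ := exists_emb_eq x
  obtain ⟨j, s, rfl⟩ := exists_emb_eq y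
  rw [Matrix.sub_apply, Matrix.diagonal_apply]
  by_cases h : i = j
  · subst h
    simp only [Dmat_apply_emb_self, emb_inj, blockOf_emb]
    simp only [Jord, Matrix.of_apply, Fin.ext_iff]
    split_ifs <;> first | (exfalso; omega) | ring
  · rw [Dmat_apply_emb_of_ne _ _ r s h, Dmat_apply_emb_of_ne _ _ r s h, sub_zero,
      if_neg fun e => h (eq_of_emb_eq e)]

lemma Dmat_mem_homogeneous (α lam : F) : Dmat dv α lam ∈ homogeneous F (blockOf dv) 0 := by
  intro x y hxy
  obtain ⟨i, r, rfl⟩ := exists_emb_eq x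
  obtain ⟨j, s, rfl⟩ := exists_emb_eq y
  refine Dmat_apply_emb_of_ne _ _ r s ?_
  rintro rfl
  simp at hxy

lemma Dmat_zero_mem_raising :
    Dmat dv (0 : F) 0 ∈ raising F (fun x : Fin (dtot dv) => (x : ℕ)) 1 := by
  intro x y hxy
  obtain ⟨i, r, rfl⟩ := exists_emb_eq x
  obtain ⟨j, s, rfl⟩ := exists_emb_eq y
  by_cases h : i = j
  · subst h
    simp only [emb] at hxy
    simp only [Dmat_apply_emb_self, Jord, Matrix.of_apply]
    split_ifs <;> first | omega | simp
  · exact Dmat_apply_emb_of_ne _ _ r s h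

lemma IsEShaped.mem_homogeneous {A : Matrix (Fin (dtot dv)) (Fin (dtot dv)) F}
    (hA : IsEShaped dv A) : A ∈ homogeneous F (blockOf dv) 1 := by
  intro x y hxy
  obtain ⟨i, r, rfl⟩ := exists_emb_eq x
  obtain ⟨j, s, rfl⟩ := exists_emb_eq y
  simp only [blockOf_emb] at hxy
  exact congrFun (congrFun (hA.1 i j hxy) r) s

lemma raising_blockOf_le :
    raising F (blockOf dv) 1 ≤ raising F (fun x : Fin (dtot dv) => (x : ℕ)) 1 := by
  refine raising_one_le_raising_one fun x y hxy => ?_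
  obtain ⟨i, r, rfl⟩ := exists_emb_eq x
  obtain ⟨j, s, rfl⟩ := exists_emb_eq y
  simp only [blockOf_emb] at hxy
  exact val_emb_lt_val_emb hxy r s

end Blocks

section Structure

open LieSubalgebra

variable [Field F] {k : ℕ} {dv : Fin k → ℕ} {A : Matrix (Fin (dtot dv)) (Fin (dtot dv)) F}

lemma lie_Dmat_of_mem_homogeneous (α lam : F) {X : Matrix (Fin (dtot dv)) (Fin (dtot dv)) F}
    (hX : X ∈ homogeneous F (blockOf dv) 1) :
    ⁅Dmat dv α lam, X⁆ = ⁅Dmat dv (0 : F) 0, X⁆ + lam • X := by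
  have h := lie_diagonal_of_mem_homogeneous α lam hX
  rw [← Dmat_sub_Dmat_zero, sub_lie, Nat.cast_one, one_mul] at h
  rw [← h, add_sub_cancel]

lemma iterate_lie_Dmat_mem_homogeneous (hA : IsEShaped dv A) (l : ℕ) :
    (fun Y => ⁅Dmat dv (0 : F) 0, Y⁆)^[l] A ∈ homogeneous F (blockOf dv) 1 := by
  induction l with
  | zero => exact hA.mem_homogeneous
  | succ l ih =>
    rw [Function.iterate_succ_apply']
    exact zero_add 1 ▸ lie_mem_homogeneous (Dmat_mem_homogeneous 0 0) ih

lemma lie_Dmat_mem_nAlg (hA : IsEShaped dv A) (α lam : F)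
    {X : Matrix (Fin (dtot dv)) (Fin (dtot dv)) F} (hX : X ∈ nAlg F dv A) :
    ⁅Dmat dv α lam, X⁆ ∈ nAlg F dv A := by
  refine lie_mem_lieSpan ?_ hX
  rintro _ ⟨l, rfl⟩
  rw [lie_Dmat_of_mem_homogeneous α lam (iterate_lie_Dmat_mem_homogeneous hA l),
    ← Function.iterate_succ_apply' (fun Y => ⁅Dmat dv (0 : F) 0, Y⁆)]
  exact add_mem (subset_lieSpan ⟨l + 1, rfl⟩)
    (SMulMemClass.smul_mem _ (subset_lieSpan ⟨l, rfl⟩))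

lemma nAlg_le_hAlg (hA : IsEShaped dv A) (α lam : F) : nAlg F dv A ≤ hAlg F dv α lam A := by
  refine lieSpan_le.mpr ?_
  rintro _ ⟨l, rfl⟩
  induction l with
  | zero => exact subset_lieSpan (by simp)
  | succ l ih =>
    have hD : Dmat dv α lam ∈ hAlg F dv α lam A := subset_lieSpan (by simp)
    rw [Function.iterate_succ_apply', eq_sub_of_add_eq
      (lie_Dmat_of_mem_homogeneous α lam (iterate_lie_Dmat_mem_homogeneous hA l)).symm]
    exact sub_mem (lie_mem _ hD ih) (SMulMemClass.smul_mem _ ih)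

lemma toSubmodule_hAlg (hA : IsEShaped dv A) (α lam : F) :
    (hAlg F dv α lam A).toSubmodule =
      Submodule.span F {Dmat dv α lam} ⊔ (nAlg F dv A).toSubmodule :=
  toSubmodule_lieSpan_pair (subset_lieSpan ⟨0, rfl⟩) (nAlg_le_hAlg hA α lam)
    fun _ => lie_Dmat_mem_nAlg hA α lam

lemma lie_mem_nAlg_of_mem_hAlg (hA : IsEShaped dv A) {α lam : F}
    {X Y : Matrix (Fin (dtot dv)) (Fin (dtot dv)) F}
    (hX : X ∈ hAlg F dv α lam A) (hY : Y ∈ hAlg F dv α lam A) :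
    ⁅X, Y⁆ ∈ nAlg F dv A := by
  rw [← mem_toSubmodule, toSubmodule_hAlg hA] at hX hY
  exact lie_mem_of_mem_span_singleton_sup (fun _ => lie_Dmat_mem_nAlg hA α lam) hX hY

lemma nAlg_le_raising (hA : IsEShaped dv A) :
    nAlg F dv A ≤ raisingLieSubalgebra F (blockOf dv) 1 :=
  lieSpan_le.mpr fun _ ⟨l, hl⟩ =>
    hl ▸ homogeneous_le_raising (iterate_lie_Dmat_mem_homogeneous hA l)

lemma isNilpotent_of_mem_nAlg (hA : IsEShaped dv A)
    {X : Matrix (Fin (dtot dv)) (Fin (dtot dv)) F} (hX : X ∈ nAlg F dv A) : IsNilpotent X :=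
  isNilpotent_of_mem_raising (fun x => x.isLt) (raising_blockOf_le (nAlg_le_raising hA hX))

lemma span_Dmat_inf_nAlg (hA : IsEShaped dv A) (α lam : F) :
    Submodule.span F {Dmat dv α lam} ⊓ (nAlg F dv A).toSubmodule = ⊥ :=
  eq_bot_iff.mpr <| homogeneous_inf_raising.le.trans' <|
    inf_le_inf (Submodule.span_le.mpr (Set.singleton_subset_iff.mpr (Dmat_mem_homogeneous α lam)))
      (nAlg_le_raising hA)

def nIdeal (hA : IsEShaped dv A) (α lam : F) : LieIdeal F (hAlg F dv α lam A) where
  toSubmodule := (nAlg F dv A).toSubmodule.comap (hAlg F dv α lam A).toSubmodule.subtype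
  lie_mem {x y} _ := lie_mem_nAlg_of_mem_hAlg hA x.2 y.2

lemma isSolvable_hAlg (hA : IsEShaped dv A) (α lam : F) :
    LieAlgebra.IsSolvable (hAlg F dv α lam A) := by
  have : LieRing.IsNilpotent (nIdeal hA α lam) :=
    isNilpotent_of_forall_isNilpotent_ad (nIdeal hA α lam : LieSubalgebra F (hAlg F dv α lam A))
      fun _ hx => LieAlgebra.isNilpotent_ad_of_isNilpotent (isNilpotent_of_mem_nAlg hA hx)
  refine isSolvable_of_derivedSeries_one_le (nIdeal hA α lam) ?_
  rw [LieAlgebra.derivedSeries_def, LieAlgebra.derivedSeriesOfIdeal_succ,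
    LieAlgebra.derivedSeriesOfIdeal_zero, LieSubmodule.lie_le_iff]
  exact fun x _ y _ => lie_mem_nAlg_of_mem_hAlg hA x.2 y.2

lemma Dmat_lam_zero (α : F) : Dmat dv α 0 = α • 1 + Dmat dv 0 0 := by
  rw [← sub_eq_iff_eq_add, Dmat_sub_Dmat_zero]
  simp [Matrix.smul_one_eq_diagonal]

lemma isNilpotent_hAlg_lam_zero (hA : IsEShaped dv A) (α : F) :
    LieRing.IsNilpotent (hAlg F dv α 0 A) := by
  refine isNilpotent_of_forall_isNilpotent_ad _ fun x hx => ?_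
  rw [← mem_toSubmodule, toSubmodule_hAlg hA, Submodule.mem_sup] at hx
  obtain ⟨_, hd, Z, hZ, rfl⟩ := hx
  obtain ⟨c, rfl⟩ := Submodule.mem_span_singleton.mp hd
  have hsub : c • Dmat dv α 0 + Z - algebraMap F _ (c * α) = c • Dmat dv 0 0 + Z := by
    rw [Dmat_lam_zero, Algebra.algebraMap_eq_smul_one]
    module
  refine isNilpotent_ad_of_isNilpotent_sub_algebraMap (c * α)
    (isNilpotent_of_mem_raising (fun x => x.isLt) (hsub ▸ add_mem ?_ ?_))
  · exact Submodule.smul_mem _ c Dmat_zero_mem_raising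
  · exact raising_blockOf_le (nAlg_le_raising hA hZ)

end Structure

theorem statement3_general {F : Type*} [Field F] {k : ℕ}
    (dv : Fin k → ℕ) (α lam : F)
    (A : Matrix (Fin (dtot dv)) (Fin (dtot dv)) F) (hA : IsEShaped dv A) :
    LieAlgebra.IsSolvable ↥(hAlg F dv α lam A) ∧
    (lam = 0 → LieRing.IsNilpotent ↥(hAlg F dv α lam A)) ∧
    (nAlg F dv A ≤ hAlg F dv α lam A ∧
      ∀ X ∈ hAlg F dv α lam A, ∀ Y ∈ nAlg F dv A, ⁅X, Y⁆ ∈ nAlg F dv A) ∧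
    (Submodule.span F {Dmat dv α lam} ⊔ (nAlg F dv A).toSubmodule =
        (hAlg F dv α lam A).toSubmodule ∧
      Submodule.span F {Dmat dv α lam} ⊓ (nAlg F dv A).toSubmodule = ⊥) := by
  refine ⟨isSolvable_hAlg hA α lam, ?_, ⟨nAlg_le_hAlg hA α lam, fun X hX Y hY => ?_⟩,
    (toSubmodule_hAlg hA α lam).symm, span_Dmat_inf_nAlg hA α lam⟩
  · rintro rfl
    exact isNilpotent_hAlg_lam_zero hA α
  · exact lie_mem_nAlg_of_mem_hAlg hA hX (nAlg_le_hAlg hA α lam hY)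

/-- Proposition `prop.struture`, parts (a),(b),(c):  `h(α,λ,S)` is solvable
(nilpotent if `λ = 0`), `n(S)` is a Lie ideal of `h(α,λ,S)`, and as a vector space
`h(α,λ,S) = F·D(α,λ) ⊕ n(S)`. -/
theorem statement3 {F : Type*} [Field F] [CharZero F] {k : ℕ} (hk : 2 ≤ k)
    (dv : Fin k → ℕ) (hdv : ∀ i, 0 < dv i) (α lam : F)
    (A : Matrix (Fin (dtot dv)) (Fin (dtot dv)) F) (hA : IsEShaped dv A) :
    LieAlgebra.IsSolvable ↥(hAlg F dv α lam A) ∧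
    (lam = 0 → LieRing.IsNilpotent ↥(hAlg F dv α lam A)) ∧
    (nAlg F dv A ≤ hAlg F dv α lam A ∧
      ∀ X ∈ hAlg F dv α lam A, ∀ Y ∈ nAlg F dv A, ⁅X, Y⁆ ∈ nAlg F dv A) ∧
    (Submodule.span F {Dmat dv α lam} ⊔ (nAlg F dv A).toSubmodule =
        (hAlg F dv α lam A).toSubmodule ∧
      Submodule.span F {Dmat dv α lam} ⊓ (nAlg F dv A).toSubmodule = ⊥) :=
  statement3_general dv α lam A hA

end Paper
end
end
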